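/- arXiv:1609.08367 — 5 statements merged into one kernel-verified Lean document; each statement's English description precedes it below -/
import Mathlib

section
/- A stream σ over a set A is the solution of a finite simple equation system (equivalently, is the behaviour of a state in a finite stream automaton) if and only if σ is eventually periodic, i.e., there exist k < n in ℕ with σ^(k) = σ^(n), where σ^(m) denotes the m-th iterated tail of σ. -/
def StreamTail {A : Type*} (σ : ℕ → A) : ℕ → A := fun n => σ (n + 1)

lemma streamTail_iterate_apply {A : Type*} (σ : ℕ → A) (m j : ℕ) :
    StreamTail^[m] σ j = σ (j + m) := by
  induction m generalizing σ j with
  | zero => rfl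
  | succ m ih =>
      rw [Function.iterate_succ_apply, ih]
      simp [StreamTail, Nat.add_assoc, Nat.add_comm 1 m]

theorem simple_spec_iff_eventually_periodic {A : Type*} (σ : ℕ → A) :
    (∃ (X : Type) (_ : Fintype X) (e : X → A × X) (h : X → ℕ → A) (x : X),
        (∀ y, h y 0 = (e y).1 ∧ StreamTail (h y) = h (e y).2) ∧ h x = σ) ↔
      ∃ k n : ℕ, k < n ∧ StreamTail^[k] σ = StreamTail^[n] σ := by
  constructor
  · rintro ⟨X, _, e, h, x, hsol, rfl⟩
    set s : ℕ → X := fun m => (fun y => (e y).2)^[m] x with hs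
    have key : ∀ m, StreamTail^[m] (h x) = h (s m) := by
      intro m
      induction m with
      | zero => rfl
      | succ m ih =>
          have hstep : s (m + 1) = (e (s m)).2 := Function.iterate_succ_apply' _ _ _
          rw [Function.iterate_succ_apply', ih, (hsol (s m)).2, hstep]
    obtain ⟨a, b, hab, heq⟩ := Finite.exists_ne_map_eq_of_infinite s
    rcases hab.lt_or_gt with hlt | hlt
    · exact ⟨a, b, hlt, by rw [key, key, heq]⟩
    · exact ⟨b, a, hlt, by rw [key, key, heq]⟩
  · rintro ⟨k, n, hkn, hper⟩
    have hn : 0 < n := Nat.lt_of_le_of_lt (Nat.zero_le k) hkn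
    refine ⟨Fin n, inferInstance, fun i =>
      (σ i, if hi : (i : ℕ) + 1 < n then ⟨i + 1, hi⟩ else ⟨k, hkn⟩),
      fun i => StreamTail^[(i : ℕ)] σ, ⟨0, hn⟩, ?_, rfl⟩
    intro i
    constructor
    · simp [streamTail_iterate_apply]
    · show StreamTail (StreamTail^[(i : ℕ)] σ) = _
      rw [show StreamTail (StreamTail^[(i : ℕ)] σ) = StreamTail^[(i : ℕ) + 1] σ from
        (Function.iterate_succ_apply' _ _ _).symm]
      by_cases hi : (i : ℕ) + 1 < n
      · simp [hi]
      · have : (i : ℕ) + 1 = n := le_antisymm (Nat.succ_le_of_lt i.isLt) (not_lt.1 hi)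
        simp [hi, this, hper]
end

section
/- Let A be a field. If σ ∈ A^ω is rational, i.e., σ = ρ × τ⁻¹ for polynomial streams ρ, τ (streams with finitely many nonzero entries) with τ(0) ≠ 0, then there exists d ∈ ℕ and coefficients a_0,...,a_{d−1} ∈ A such that the d-th tail of σ is a linear combination of the lower-order tails: σ^(d) = Σ_{i=0}^{d−1} a_i · σ^(i). -/
/-!
Multiplying out `τ * σ = ρ` and comparing coefficients of degree `n + d`, where `d` bounds the
lengths of both `ρ` and `τ`, gives `∑_{i ≤ d} τ_{d-i} σ_{n+i} = 0`. Since `τ_0 ≠ 0`, this expresses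
`σ_{n+d}` through `σ_n, …, σ_{n+d-1}`: the reversed denominator is a linear recurrence for `σ`.
-/

open Finset

namespace PowerSeries

theorem coeff_add_mul_eq_sum_of_coeff_eq_zero {R : Type*} [Semiring R] {τ : R⟦X⟧} {d : ℕ}
    (hτ : ∀ m > d, coeff m τ = 0) (σ : R⟦X⟧) (n : ℕ) :
    coeff (n + d) (τ * σ) = ∑ i ∈ range (d + 1), coeff (d - i) τ * coeff (n + i) σ := by
  rw [coeff_mul, Nat.sum_antidiagonal_eq_sum_range_succ (fun a b => coeff a τ * coeff b σ),
    ← sum_subset (range_subset_range.2 (by omega : d + 1 ≤ n + d + 1)), ← sum_range_reflect]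
  · refine sum_congr rfl fun i hi => ?_
    rw [mem_range] at hi
    congr 3; omega
  · intro k _ hk
    rw [mem_range, not_lt] at hk
    rw [hτ k (by omega), zero_mul]

noncomputable def recurrenceOfDenominator {K : Type*} [Field K] (τ : K⟦X⟧) (d : ℕ) :
    LinearRecurrence K :=
  ⟨d, fun i => -(coeff (d - i) τ / constantCoeff τ)⟩

theorem isSolution_recurrenceOfDenominator {K : Type*} [Field K] {τ σ : K⟦X⟧} {d : ℕ}
    (hτ0 : constantCoeff τ ≠ 0) (hτ : ∀ m > d, coeff m τ = 0)
    (hτσ : ∀ m ≥ d, coeff m (τ * σ) = 0) :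
    (recurrenceOfDenominator τ d).IsSolution fun n => coeff n σ := by
  intro n
  have h := coeff_add_mul_eq_sum_of_coeff_eq_zero hτ σ n
  rw [hτσ _ (by omega), sum_range_succ, Nat.sub_self, coeff_zero_eq_constantCoeff_apply,
    ← Fin.sum_univ_eq_sum_range (fun i => coeff (d - i) τ * coeff (n + i) σ)] at h
  calc coeff (n + d) σ
        = -(∑ i : Fin d, coeff (d - i) τ * coeff (n + i) σ) / constantCoeff τ := by
        field_simp
        linear_combination -h
    _ = ∑ i : Fin d, -(coeff (d - i) τ / constantCoeff τ) * coeff (n + i) σ := by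
        rw [neg_div, sum_div, ← sum_neg_distrib]
        exact sum_congr rfl fun i _ => by ring

end PowerSeries

theorem rational_stream_tail_linear_combination {A : Type*} [Field A]
    (σ ρ τ : PowerSeries A)
    (hρ : ∃ N : ℕ, ∀ m ≥ N, PowerSeries.coeff m ρ = 0)
    (hτ : ∃ N : ℕ, ∀ m ≥ N, PowerSeries.coeff m τ = 0)
    (hτ0 : PowerSeries.constantCoeff τ ≠ 0)
    (hσ : σ = ρ * τ⁻¹) :
    ∃ (d : ℕ) (a : Fin d → A), ∀ n : ℕ,
      PowerSeries.coeff (n + d) σ =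
        ∑ i : Fin d, a i * PowerSeries.coeff (n + (i : ℕ)) σ := by
  obtain ⟨Nρ, hNρ⟩ := hρ
  obtain ⟨Nτ, hNτ⟩ := hτ
  have hτσ : τ * σ = ρ := by
    rw [hσ, mul_left_comm, PowerSeries.mul_inv_cancel τ hτ0, mul_one]
  exact ⟨_, _, PowerSeries.isSolution_recurrenceOfDenominator (d := max Nρ Nτ) hτ0
    (fun m _ => hNτ m (by omega)) (fun m _ => hτσ ▸ hNρ m (by omega))⟩
end

section
/- The set ℝ^ω together with the map σ ↦ (σ(0), Δσ), where (Δσ)(n) = σ(n+1) − σ(n), is a final stream automaton: for every o : X → ℝ, d : X → X, there is a unique h : X → ℝ^ω with h(x)(0) = o(x) and Δ(h(x)) = h(d(x)) for all x ∈ X. -/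
def StreamDelta (σ : ℕ → ℝ) : ℕ → ℝ := fun n => σ (n + 1) - σ n

private def Haux {X : Type*} (o : X → ℝ) (d : X → X) : ℕ → X → ℝ
  | 0, x => o x
  | n + 1, x => Haux o d n (d x) + Haux o d n x

theorem delta_final_automaton {X : Type*} (o : X → ℝ) (d : X → X) :
    ∃! h : X → ℕ → ℝ, ∀ x, h x 0 = o x ∧ StreamDelta (h x) = h (d x) := by
  refine ⟨fun x n => Haux o d n x, fun x => ⟨rfl, ?_⟩, ?_⟩
  · funext n
    simp [StreamDelta, Haux]
  · intro g hg
    funext x n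
    induction n generalizing x with
    | zero => exact (hg x).1
    | succ n ih =>
      have h2 := congrFun (hg x).2 n
      simp only [StreamDelta] at h2
      have : g x (n + 1) = g (d x) n + g x n := by linarith
      rw [this, ih, ih]
      rfl
end

section
/- The set A^ω together with the map σ ↦ (σ(0), even(σ'), odd(σ')) is a final 2-stream automaton: for every 2-stream automaton ⟨o, d₀, d₁⟩ : Q → A × Q × Q, there is a unique h : Q → A^ω such that h(q)(0) = o(q), even(h(q)') = h(d₀(q)), and odd(h(q)') = h(d₁(q)) for all q ∈ Q. -/
def StreamEven {A : Type*} (σ : ℕ → A) : ℕ → A := fun n => σ (2 * n)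

def StreamOdd {A : Type*} (σ : ℕ → A) : ℕ → A := fun n => σ (2 * n + 1)

def runAut {A Q : Type*} (o : Q → A) (d0 d1 : Q → Q) : ℕ → Q → A
  | 0, q => o q
  | (m+1), q =>
    if (m+1) % 2 = 1 then runAut o d0 d1 ((m+1)/2) (d0 q)
    else runAut o d0 d1 ((m+1)/2 - 1) (d1 q)
decreasing_by
  · exact Nat.div_lt_self (Nat.succ_pos m) one_lt_two
  · exact lt_of_le_of_lt (Nat.sub_le _ _) (Nat.div_lt_self (Nat.succ_pos m) one_lt_two)

lemma runAut_odd {A Q : Type*} (o : Q → A) (d0 d1 : Q → Q) (n : ℕ) (q : Q) :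
    runAut o d0 d1 (2 * n + 1) q = runAut o d0 d1 n (d0 q) := by
  rw [runAut]
  have h1 : (2*n+1) % 2 = 1 := by omega
  have h2 : (2*n+1)/2 = n := by omega
  rw [if_pos h1, h2]

lemma runAut_even {A Q : Type*} (o : Q → A) (d0 d1 : Q → Q) (n : ℕ) (q : Q) :
    runAut o d0 d1 (2 * n + 2) q = runAut o d0 d1 n (d1 q) := by
  show runAut o d0 d1 (2*n+1+1) q = _
  rw [runAut]
  have h1 : ¬ (2*n+1+1) % 2 = 1 := by omega
  have h2 : (2*n+1+1)/2 - 1 = n := by omega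
  rw [if_neg h1, h2]

theorem even_odd_of_tail_final {A : Type*} {Q : Type*}
    (o : Q → A) (d0 d1 : Q → Q) :
    ∃! h : Q → ℕ → A, ∀ q,
      h q 0 = o q ∧
      StreamEven (StreamTail (h q)) = h (d0 q) ∧
      StreamOdd (StreamTail (h q)) = h (d1 q) := by
  refine ⟨fun q n => runAut o d0 d1 n q, ?_, ?_⟩
  · intro q
    refine ⟨by simp [runAut], ?_, ?_⟩
    · funext n
      show runAut o d0 d1 (2 * n + 1) q = _
      exact runAut_odd o d0 d1 n q
    · funext n
      show runAut o d0 d1 (2 * n + 1 + 1) q = _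
      exact runAut_even o d0 d1 n q
  · intro g hg
    funext q n
    induction n using Nat.strong_induction_on generalizing q with
    | _ n ih =>
      match n with
      | 0 => rw [runAut]; exact (hg q).1
      | (m+1) =>
        rcases Nat.even_or_odd m with he | ho
        · obtain ⟨k, hk⟩ := he
          have h1 : m + 1 = 2 * k + 1 := by omega
          have := congrFun ((hg q).2.1) k
          simp only [StreamEven, StreamTail] at this
          rw [h1]
          calc g q (2 * k + 1) = g (d0 q) k := this
            _ = runAut o d0 d1 k (d0 q) := ih k (by omega) _
            _ = runAut o d0 d1 (2 * k + 1) q := (runAut_odd o d0 d1 k q).symm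
        · obtain ⟨k, hk⟩ := ho
          have h1 : m + 1 = 2 * k + 2 := by omega
          have := congrFun ((hg q).2.2) k
          simp only [StreamOdd, StreamTail] at this
          rw [h1]
          calc g q (2 * k + 2) = g (d1 q) k := this
            _ = runAut o d0 d1 k (d1 q) := ih k (by omega) _
            _ = runAut o d0 d1 (2 * k + 2) q := (runAut_even o d0 d1 k q).symm
end

section
/- The unique stream τ over 𝔽₂ (equivalently over {0,1}) satisfying τ(0) = 0, even(τ) = τ, and odd(τ) = N, where N satisfies N(0) = 1, even(N) = N, odd(N) = τ, is the Thue–Morse sequence: τ(n) equals the parity of the number of 1s in the binary expansion of n. -/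
theorem thue_morse_even_odd (τ N : ℕ → ZMod 2)
    (hτ0 : τ 0 = 0)
    (hτe : ∀ n, τ (2 * n) = τ n)
    (hτo : ∀ n, τ (2 * n + 1) = N n)
    (hN0 : N 0 = 1)
    (hNe : ∀ n, N (2 * n) = N n)
    (hNo : ∀ n, N (2 * n + 1) = τ n) :
    ∀ n : ℕ, τ n = ((Nat.digits 2 n).sum : ZMod 2) := by
  have key : ∀ n : ℕ, τ n = ((Nat.digits 2 n).sum : ZMod 2) ∧
      N n = ((Nat.digits 2 n).sum : ZMod 2) + 1 := by
    intro n
    induction n using Nat.strong_induction_on with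
    | _ n ih =>
      match n with
      | 0 => simp [hτ0, hN0]
      | Nat.succ m =>
        rcases Nat.even_or_odd (m + 1) with ⟨k, hk⟩ | ⟨k, hk⟩
        · have hk' : m + 1 = 2 * k := by omega
          have hklt : k < m + 1 := by omega
          have hk0 : 0 < k := by omega
          have hd : Nat.digits 2 (2 * k) = 0 :: Nat.digits 2 k := by
            rw [Nat.digits_def' (by norm_num) (by omega)]
            simp [Nat.mul_div_cancel_left _ (by norm_num : 0 < 2)]
          obtain ⟨h1, h2⟩ := ih k hklt
          rw [Nat.succ_eq_add_one, hk', hτe, hNe, hd]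
          simp [h1, h2]
        · have hk' : m + 1 = 2 * k + 1 := by omega
          have hklt : k < m + 1 := by omega
          have hd : Nat.digits 2 (2 * k + 1) = 1 :: Nat.digits 2 k := by
            rw [Nat.digits_def' (by norm_num) (by omega)]
            congr 1
            · omega
            · congr 1; omega
          obtain ⟨h1, h2⟩ := ih k hklt
          rw [Nat.succ_eq_add_one, hk', hτo, hNo, hd]
          constructor
          · simp [h2]; ring
          · simp [h1]
            have : (1:ZMod 2) + 1 = 0 := by decide
            linear_combination -this
  exact fun n => (key n).1
end
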